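/- arXiv:1506.02694 — 8 statements merged into one kernel-verified Lean document; each statement's English description precedes it below -/
import Mathlib

section
/- Let d ≥ 1 and let X be a nonempty compact metric space equipped with a continuous additive action of ℝ^d (written (v,T) ↦ v +ᵥ T) that is uniquely ergodic with invariant Borel probability measure μ. Let α : X × ℝ^d → ℝ^d be a continuous dynamical cocycle, and suppose there exist constants λ ≥ 1 and C ≥ 0 such that λ⁻¹‖v‖ − C ≤ ‖α(T,v)‖ ≤ λ‖v‖ + C for all T ∈ X and v ∈ ℝ^d. Then the map A : ℝ^d → ℝ^d defined by A(v) = ∫_X α(T,v) dμ(T) is a bijective ℝ-linear map. (This is the abstract content of the theorem that the Ruelle–Sullivan image C_μ[h] of a homeomorphism/orbit equivalence of uniquely ergodic tiling spaces is an invertible matrix.) -/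
open MeasureTheory

/-- `Euc d` is `d`-dimensional Euclidean space. -/
abbrev Euc (d : ℕ) := EuclideanSpace ℝ (Fin d)

/-!
Additivity of `A` is the cocycle identity integrated against the invariant measure, and the upper
bound `‖α T v‖ ≤ λ‖v‖ + C` integrates to `‖A v‖ ≤ λ‖v‖ + C`; additivity removes the constant `C`
by scaling, so `A` is continuous and hence `ℝ`-linear.

The heart of the matter is the lower bound `λ⁻¹‖v‖ ≤ ‖A v‖`, which gives injectivity and hence
bijectivity. By the cocycle identity, `α T (n • v) / n` is the Birkhoff average of `α · v` along the
translation by `v`, so by von Neumann's mean ergodic theorem a subsequence converges a.e. to a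
limit `g` with `λ⁻¹‖v‖ ≤ ‖g‖` and `∫ g = A v`. The cocycle identity also shows that translating
the base point by `w` changes `α T (n • v)` by at most `2 (λ‖w‖ + C)`, so `g` is invariant under
every translation. Unique ergodicity forces a bounded invariant function to be a.e. constant
(otherwise `1 + ε (g - ∫ g)` would be the density of a second invariant probability measure),
so `g = A v` a.e.
-/

open Filter Function Topology
open scoped ENNReal

def IsDynamicalCocycle {V X E : Type*} [Add V] [VAdd V X] [Add E] (α : X → V → E) : Prop :=
  ∀ (T : X) (v w : V), α T (v + w) = α T v + α (v +ᵥ T) w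

def IsUniquelyErgodic (G : Type*) {X : Type*} [VAdd G X] [MeasurableSpace X]
    (μ : Measure X) : Prop :=
  (∀ g : G, MeasurePreserving (g +ᵥ ·) μ μ) ∧
    ∀ ν : Measure X, IsProbabilityMeasure ν → (∀ g : G, MeasurePreserving (g +ᵥ ·) ν ν) → ν = μ

namespace IsDynamicalCocycle

variable {V X E : Type*} {α : X → V → E} [AddCommGroup E]

theorem map_zero [AddMonoid V] [AddAction V X] (hα : IsDynamicalCocycle α) (T : X) :
    α T 0 = 0 := by
  simpa using hα T 0 0

theorem map_nsmul [AddMonoid V] [AddAction V X] (hα : IsDynamicalCocycle α) (n : ℕ) (v : V)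
    (T : X) : α T (n • v) = birkhoffSum (v +ᵥ ·) (α · v) n T := by
  induction n with
  | zero => simp [hα.map_zero]
  | succ n ih => rw [succ_nsmul, hα, ih, birkhoffSum_succ, vadd_iterate_apply]

theorem vadd_sub_eq [AddCommMonoid V] [AddAction V X] (hα : IsDynamicalCocycle α) (T : X)
    (v w : V) : α (w +ᵥ T) v - α T v = α (v +ᵥ T) w - α T w := by
  rw [sub_eq_sub_iff_add_eq_add, add_comm _ (α T v), ← hα, add_comm v, hα, add_comm]

end IsDynamicalCocycle

theorem AddMonoidHom.norm_le_mul_of_norm_le_mul_add {E F : Type*} [SeminormedAddCommGroup E]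
    [NormedSpace ℝ E] [SeminormedAddCommGroup F] [NormedSpace ℝ F] (f : E →+ F) {a C : ℝ}
    (h : ∀ v, ‖f v‖ ≤ a * ‖v‖ + C) (v : E) : ‖f v‖ ≤ a * ‖v‖ := by
  have hscaled : ∀ n : ℕ, 0 < n → ‖f v‖ ≤ a * ‖v‖ + C / n := by
    intro n hn
    have hn' : (0 : ℝ) < n := Nat.cast_pos.2 hn
    have := h ((n : ℝ) • v)
    rw [map_natCast_smul f ℝ ℝ, norm_smul, norm_smul, Real.norm_natCast] at this
    rw [add_div' _ _ _ hn'.ne', le_div_iff₀ hn']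
    linarith
  refine ge_of_tendsto ?_ (eventually_atTop.2 ⟨1, fun n hn => hscaled n hn⟩)
  simpa using tendsto_const_nhds.add (tendsto_const_div_atTop_nhds_zero_nat C)

theorem norm_birkhoffAverage_le {X E : Type*} [SeminormedAddCommGroup E] [NormedSpace ℝ E]
    (S : X → X) {f : X → E} {M : ℝ} (hf : ∀ x, ‖f x‖ ≤ M) (n : ℕ) (x : X) :
    ‖birkhoffAverage ℝ S f n x‖ ≤ M := by
  rcases Nat.eq_zero_or_pos n with rfl | hn
  · simpa using (norm_nonneg _).trans (hf x)
  have hn' : (0 : ℝ) < n := Nat.cast_pos.2 hn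
  calc ‖birkhoffAverage ℝ S f n x‖ ≤ (n : ℝ)⁻¹ * ∑ _k ∈ Finset.range n, M := by
        rw [birkhoffAverage, norm_smul, Real.norm_of_nonneg (inv_nonneg.2 hn'.le)]
        gcongr
        exact norm_sum_le_of_le _ fun k _ => hf _
    _ = M := by simp [hn'.ne']

namespace MeasureTheory

variable {X E : Type*} [MeasurableSpace X] {μ : Measure X} [NormedAddCommGroup E]

theorem MeasurePreserving.integral_comp_of_aestronglyMeasurable [NormedSpace ℝ E] {Y : Type*}
    [MeasurableSpace Y] {ν : Measure Y} {S : X → Y} (hS : MeasurePreserving S μ ν) {f : Y → E}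
    (hf : AEStronglyMeasurable f ν) : ∫ x, f (S x) ∂μ = ∫ y, f y ∂ν := by
  rw [← hS.map_eq] at hf ⊢
  exact (integral_map hS.measurable.aemeasurable hf).symm

theorem MeasurePreserving.integral_birkhoffAverage [NormedSpace ℝ E] {S : X → X}
    (hS : MeasurePreserving S μ μ) {f : X → E} (hf : Integrable f μ) {n : ℕ} (hn : n ≠ 0) :
    ∫ x, birkhoffAverage ℝ S f n x ∂μ = ∫ x, f x ∂μ := by
  have hiter : ∀ k, ∫ x, f (S^[k] x) ∂μ = ∫ x, f x ∂μ := fun k =>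
    (hS.iterate k).integral_comp_of_aestronglyMeasurable hf.aestronglyMeasurable
  simp only [birkhoffAverage, birkhoffSum]
  rw [integral_smul, integral_finsetSum (f := fun k x => f (S^[k] x)) _
    fun k _ => (hS.iterate k).integrable_comp_of_integrable hf]
  simp only [hiter, Finset.sum_const, Finset.card_range]
  rw [← Nat.cast_smul_eq_nsmul ℝ, smul_smul, inv_mul_cancel₀ (Nat.cast_ne_zero.2 hn), one_smul]

theorem Lp.coeFn_birkhoffSum_compMeasurePreserving {p : ℝ≥0∞} {S : X → X}
    (hS : MeasurePreserving S μ μ) (F : Lp E p μ) (n : ℕ) :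
    ⇑(birkhoffSum (Lp.compMeasurePreserving S hS) (id : Lp E p μ → Lp E p μ) n F) =ᵐ[μ]
      birkhoffSum S F n := by
  induction n with
  | zero => simpa using Lp.coeFn_zero E p μ
  | succ n ih =>
    have hiter : ⇑((Lp.compMeasurePreserving S hS)^[n] F) =ᵐ[μ] F ∘ S^[n] := by
      rw [Lp.compMeasurePreserving_iterate]
      exact Lp.coeFn_compMeasurePreserving F _
    filter_upwards [Lp.coeFn_add (birkhoffSum (Lp.compMeasurePreserving S hS) id n F)
      ((Lp.compMeasurePreserving S hS)^[n] F), ih, hiter] with x hadd hsum hF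
    rw [birkhoffSum_succ, birkhoffSum_succ, id, hadd, Pi.add_apply, hsum, hF, comp_apply]

theorem Lp.coeFn_birkhoffAverage_compMeasurePreserving {p : ℝ≥0∞} [NormedSpace ℝ E]
    {S : X → X} (hS : MeasurePreserving S μ μ) (F : Lp E p μ) (n : ℕ) :
    ⇑(birkhoffAverage ℝ (Lp.compMeasurePreserving S hS) (id : Lp E p μ → Lp E p μ) n F) =ᵐ[μ]
      birkhoffAverage ℝ S F n := by
  filter_upwards [Lp.coeFn_smul (n : ℝ)⁻¹ (birkhoffSum (Lp.compMeasurePreserving S hS) id n F),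
    Lp.coeFn_birkhoffSum_compMeasurePreserving hS F n] with x hsmul hsum
  rw [birkhoffAverage, hsmul, Pi.smul_apply, hsum, birkhoffAverage]

theorem MeasurePreserving.exists_ae_tendsto_birkhoffAverage [InnerProductSpace ℝ E]
    [CompleteSpace E] {S : X → X} (hS : MeasurePreserving S μ μ) {f : X → E} (hf : MemLp f 2 μ) :
    ∃ g : X → E, StronglyMeasurable g ∧ ∃ ns : ℕ → ℕ, StrictMono ns ∧
      ∀ᵐ x ∂μ, Tendsto (fun i => birkhoffAverage ℝ S f (ns i) x) atTop (𝓝 (g x)) := by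
  have hL2 := ContinuousLinearMap.tendsto_birkhoffAverage_orthogonalProjection _
    (Lp.compMeasurePreservingₗᵢ ℝ S hS (E := E) (p := 2)).norm_toContinuousLinearMap_le
    (hf.toLp f)
  have hae : ∀ n, ⇑(birkhoffAverage ℝ (Lp.compMeasurePreservingₗᵢ ℝ S hS (E := E) (p := 2))
      (id : Lp E 2 μ → Lp E 2 μ) n (hf.toLp f)) =ᵐ[μ] birkhoffAverage ℝ S f n := fun n =>
    (Lp.coeFn_birkhoffAverage_compMeasurePreserving hS _ n).trans
      (hS.quasiMeasurePreserving.birkhoffAverage_ae_eq_of_ae_eq ℝ hf.coeFn_toLp n)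
  exact ⟨_, Lp.stronglyMeasurable _,
    ((tendstoInMeasure_of_tendsto_Lp hL2).congr_left hae).exists_seq_tendsto_ae⟩

theorem Measure.QuasiMeasurePreserving.comp_ae_eq_of_ae_tendsto {E ι : Type*}
    [MetricSpace E] {l : Filter ι} [l.NeBot] {τ : X → X}
    (hτ : Measure.QuasiMeasurePreserving τ μ μ) {h : ι → X → E} {g : X → E}
    (hg : ∀ᵐ x ∂μ, Tendsto (h · x) l (𝓝 (g x)))
    (hclose : ∀ x, Tendsto (fun i => dist (h i (τ x)) (h i x)) l (𝓝 0)) : g ∘ τ =ᵐ[μ] g := by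
  filter_upwards [hτ.ae hg, hg] with x hτx hx
  exact tendsto_nhds_unique hτx (hx.congr_dist (by simpa [dist_comm] using hclose x))

theorem MeasurePreserving.withDensity_of_comp_ae_eq {f : X → X} (hf : MeasurePreserving f μ μ)
    {ρ : X → ℝ≥0∞} (hρ : Measurable ρ) (hρf : ρ ∘ f =ᵐ[μ] ρ) :
    MeasurePreserving f (μ.withDensity ρ) (μ.withDensity ρ) := by
  refine ⟨hf.measurable, Measure.ext fun s hs => ?_⟩
  rw [Measure.map_apply hf.measurable hs, withDensity_apply _ (hf.measurable hs),
    withDensity_apply _ hs, ← lintegral_congr_ae (ae_restrict_of_ae hρf)]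
  conv_rhs => rw [← hf.map_eq]
  exact (setLIntegral_map hs hρ hf.measurable).symm

end MeasureTheory

namespace IsUniquelyErgodic

variable {G X : Type*} [VAdd G X] [MeasurableSpace X] {μ : Measure X} [IsProbabilityMeasure μ]

theorem density_ae_eq_one (hμ : IsUniquelyErgodic G μ) {ρ : X → ℝ≥0∞} (hρ : Measurable ρ)
    (hρ1 : ∫⁻ x, ρ x ∂μ = 1) (hρinv : ∀ g : G, ρ ∘ (g +ᵥ ·) =ᵐ[μ] ρ) : ρ =ᵐ[μ] 1 := by
  have hprob : IsProbabilityMeasure (μ.withDensity ρ) :=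
    ⟨by rwa [withDensity_apply _ MeasurableSet.univ, Measure.restrict_univ]⟩
  have hinv : μ.withDensity ρ = μ :=
    hμ.2 _ hprob fun g => (hμ.1 g).withDensity_of_comp_ae_eq hρ (hρinv g)
  refine (withDensity_eq_iff_of_sigmaFinite hρ.aemeasurable measurable_one.aemeasurable).1 ?_
  rw [withDensity_one, hinv]

theorem ae_eq_integral_of_invariant_real (hμ : IsUniquelyErgodic G μ) {φ : X → ℝ}
    (hφ : Measurable φ) {M : ℝ} (hM : ∀ᵐ x ∂μ, |φ x| ≤ M)
    (hφinv : ∀ g : G, φ ∘ (g +ᵥ ·) =ᵐ[μ] φ) : φ =ᵐ[μ] fun _ => ∫ x, φ x ∂μ := by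
  set c := ∫ x, φ x ∂μ
  set K := |M| + |c| + 1
  have hK : 0 < K := by positivity
  set r : X → ℝ := fun x => 1 + (φ x - c) / K
  have hφint : Integrable φ μ := Integrable.of_bound hφ.aestronglyMeasurable M hM
  have hdev : Integrable (fun x => (φ x - c) / K) μ :=
    (hφint.sub (integrable_const c)).div_const K
  have hrint : Integrable r μ := (integrable_const 1).add hdev
  have hr_nonneg : 0 ≤ᵐ[μ] r := by
    filter_upwards [hM] with x hx
    have hdev_le : |φ x - c| ≤ K := (abs_sub _ _).trans (by linarith [le_abs_self M])
    have : -1 ≤ (φ x - c) / K := by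
      rw [le_div_iff₀ hK]
      linarith [neg_le_of_abs_le hdev_le]
    show 0 ≤ 1 + (φ x - c) / K
    linarith
  have hr_int : ∫ x, r x ∂μ = 1 := by
    simp only [r]
    rw [integral_add (integrable_const 1) hdev, integral_div,
      integral_sub hφint (integrable_const c)]
    simp [c]
  have hρ := hμ.density_ae_eq_one (ρ := fun x => ENNReal.ofReal (r x)) (by fun_prop)
    (by rw [← ofReal_integral_eq_lintegral_ofReal hrint hr_nonneg,
      hr_int, ENNReal.ofReal_one])
    fun g => (hφinv g).mono fun x hx => by simp only [r, comp_apply] at hx ⊢; rw [hx]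
  filter_upwards [hρ] with x hx
  have : (φ x - c) / K = 0 := by
    have := ENNReal.ofReal_eq_one.1 hx
    simp only [r] at this
    linarith
  simpa [hK.ne', sub_eq_zero] using this

theorem ae_eq_integral_of_invariant {E : Type*} [NormedAddCommGroup E] [InnerProductSpace ℝ E]
    [CompleteSpace E] [SecondCountableTopology E] (hμ : IsUniquelyErgodic G μ) {f : X → E}
    (hf : StronglyMeasurable f) {M : ℝ} (hM : ∀ᵐ x ∂μ, ‖f x‖ ≤ M)
    (hfinv : ∀ g : G, f ∘ (g +ᵥ ·) =ᵐ[μ] f) : f =ᵐ[μ] fun _ => ∫ x, f x ∂μ := by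
  have hfint : Integrable f μ := Integrable.of_bound hf.aestronglyMeasurable M hM
  rw [← sub_ae_eq_zero]
  refine ae_eq_zero_of_forall_inner (𝕜 := ℝ) fun c => ?_
  have hc := hμ.ae_eq_integral_of_invariant_real (φ := fun x => inner ℝ c (f x))
    (stronglyMeasurable_const.inner hf).measurable (M := ‖c‖ * M)
    (hM.mono fun x hx => (abs_real_inner_le_norm c (f x)).trans (by gcongr))
    fun g => (hfinv g).mono fun x hx => by simp only [comp_apply] at hx ⊢; rw [hx]
  filter_upwards [hc] with x hx
  simp [inner_sub_right, hx, integral_inner hfint]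

end IsUniquelyErgodic

namespace IsDynamicalCocycle

variable {V X E : Type*} {α : X → V → E}

section NormedSpace

variable [NormedAddCommGroup E] [NormedSpace ℝ E]

theorem birkhoffAverage_eq [AddMonoid V] [AddAction V X] (hα : IsDynamicalCocycle α) (n : ℕ)
    (v : V) (T : X) : birkhoffAverage ℝ (v +ᵥ ·) (α · v) n T = (n : ℝ)⁻¹ • α T (n • v) := by
  rw [birkhoffAverage, hα.map_nsmul]

-- The cocycle identity moves the displacement `w` of the base point to the far end of the orbit.
theorem tendsto_dist_birkhoffAverage_vadd [AddCommMonoid V] [AddAction V X]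
    (hα : IsDynamicalCocycle α) {w : V} {M : ℝ} (hM : ∀ T, ‖α T w‖ ≤ M) (v : V) (T : X) :
    Tendsto (fun n => dist (birkhoffAverage ℝ (v +ᵥ ·) (α · v) n (w +ᵥ T))
      (birkhoffAverage ℝ (v +ᵥ ·) (α · v) n T)) atTop (𝓝 0) := by
  refine squeeze_zero (fun n => dist_nonneg) (fun n => ?_)
    (tendsto_const_div_atTop_nhds_zero_nat (2 * M))
  rw [hα.birkhoffAverage_eq, hα.birkhoffAverage_eq, dist_eq_norm, ← smul_sub, hα.vadd_sub_eq,
    norm_smul, Real.norm_of_nonneg (by positivity), inv_mul_eq_div]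
  gcongr
  exact (norm_sub_le _ _).trans (by linarith [hM (n • v +ᵥ T), hM T])

theorem mul_norm_sub_div_le_norm_birkhoffAverage [NormedAddCommGroup V] [NormedSpace ℝ V]
    [AddAction V X] (hα : IsDynamicalCocycle α) {a C : ℝ} (hlow : ∀ T v, a * ‖v‖ - C ≤ ‖α T v‖)
    (v : V) (T : X) {n : ℕ} (hn : n ≠ 0) :
    a * ‖v‖ - C / n ≤ ‖birkhoffAverage ℝ (v +ᵥ ·) (α · v) n T‖ := by
  have hn' : (0 : ℝ) < n := Nat.cast_pos.2 (Nat.pos_of_ne_zero hn)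
  have := hlow T ((n : ℝ) • v)
  rw [norm_smul, Real.norm_natCast] at this
  rw [hα.birkhoffAverage_eq, norm_smul, Real.norm_of_nonneg (inv_nonneg.2 hn'.le),
    ← Nat.cast_smul_eq_nsmul ℝ, inv_mul_eq_div, le_div_iff₀ hn', sub_mul,
    div_mul_cancel₀ _ hn'.ne']
  linarith

theorem integral_add [MeasurableSpace X] {μ : Measure X} [AddMonoid V] [AddAction V X]
    (hα : IsDynamicalCocycle α) (hinv : ∀ v : V, MeasurePreserving (v +ᵥ ·) μ μ)
    (hint : ∀ v, Integrable (α · v) μ) (v w : V) :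
    ∫ T, α T (v + w) ∂μ = ∫ T, α T v ∂μ + ∫ T, α T w ∂μ := by
  simp_rw [hα _ v w]
  rw [MeasureTheory.integral_add (hint v) (g := fun T => α (v +ᵥ T) w)
    ((hinv v).integrable_comp_of_integrable (hint w)),
    (hinv v).integral_comp_of_aestronglyMeasurable (hint w).aestronglyMeasurable]

end NormedSpace

theorem mul_norm_le_norm_integral [NormedAddCommGroup V] [NormedSpace ℝ V] [AddAction V X]
    [NormedAddCommGroup E] [InnerProductSpace ℝ E] [CompleteSpace E] [SecondCountableTopology E]
    [MeasurableSpace X] {μ : Measure X} [IsProbabilityMeasure μ] (hα : IsDynamicalCocycle α)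
    (hμ : IsUniquelyErgodic V μ) (hmeas : ∀ v, StronglyMeasurable (α · v)) {a b C : ℝ}
    (hlow : ∀ T v, a * ‖v‖ - C ≤ ‖α T v‖) (hup : ∀ T v, ‖α T v‖ ≤ b * ‖v‖ + C) (v : V) :
    a * ‖v‖ ≤ ‖∫ T, α T v ∂μ‖ := by
  have hint : Integrable (α · v) μ :=
    Integrable.of_bound (hmeas v).aestronglyMeasurable _ (ae_of_all _ (hup · v))
  obtain ⟨g, hgm, ns, hns, hlim⟩ := (hμ.1 v).exists_ae_tendsto_birkhoffAverage
    (MemLp.of_bound (hmeas v).aestronglyMeasurable _ (ae_of_all _ (hup · v)))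
  have hns0 : ∀ i, 0 < i → ns i ≠ 0 := fun i hi => (hi.trans_le hns.le_apply).ne'
  have havg_le : ∀ n T, ‖birkhoffAverage ℝ (v +ᵥ ·) (α · v) n T‖ ≤ b * ‖v‖ + C :=
    norm_birkhoffAverage_le _ (hup · v)
  have hg_le : ∀ᵐ T ∂μ, ‖g T‖ ≤ b * ‖v‖ + C :=
    hlim.mono fun T hT => le_of_tendsto' hT.norm fun i => havg_le _ _
  have hg_ge : ∀ᵐ T ∂μ, a * ‖v‖ ≤ ‖g T‖ := by
    filter_upwards [hlim] with T hT
    refine le_of_tendsto_of_tendsto ?_ hT.norm (eventually_atTop.2 ⟨1, fun i hi =>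
      hα.mul_norm_sub_div_le_norm_birkhoffAverage hlow v T (hns0 i hi)⟩)
    simpa using tendsto_const_nhds.sub
      ((tendsto_const_div_atTop_nhds_zero_nat C).comp hns.tendsto_atTop)
  have hg_int : ∫ T, g T ∂μ = ∫ T, α T v ∂μ := by
    have havg_meas : ∀ n, AEStronglyMeasurable (birkhoffAverage ℝ (v +ᵥ ·) (α · v) n) μ :=
      fun n => ((hmeas _).const_smul _).aestronglyMeasurable.congr
        (ae_of_all _ fun T => (hα.birkhoffAverage_eq n v T).symm)
    refine tendsto_nhds_unique (tendsto_integral_of_dominated_convergence _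
      (fun i => havg_meas (ns i)) (integrable_const _) (fun i => ae_of_all _ (havg_le (ns i)))
      hlim) (tendsto_const_nhds.congr' (eventually_atTop.2 ⟨1, fun i hi =>
        ((hμ.1 v).integral_birkhoffAverage hint (hns0 i hi)).symm⟩))
  have hg_inv : ∀ w : V, g ∘ (w +ᵥ ·) =ᵐ[μ] g := fun w =>
    (hμ.1 w).quasiMeasurePreserving.comp_ae_eq_of_ae_tendsto hlim fun T =>
      (hα.tendsto_dist_birkhoffAverage_vadd (hup · w) v T).comp hns.tendsto_atTop
  obtain ⟨T, hT_ge, hT_eq⟩ := (hg_ge.and (hμ.ae_eq_integral_of_invariant hgm hg_le hg_inv)).exists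
  rwa [hT_eq, hg_int] at hT_ge

end IsDynamicalCocycle

theorem ruelle_sullivan_invertible_general
    (d : ℕ)
    (X : Type*) [MetricSpace X]
    [MeasurableSpace X] [BorelSpace X]
    [AddAction (Euc d) X]
    (μ : Measure X) [IsProbabilityMeasure μ]
    (hinv : ∀ v : Euc d, MeasurePreserving (fun T : X => v +ᵥ T) μ μ)
    (huniq : ∀ ν : Measure X, IsProbabilityMeasure ν →
      (∀ v : Euc d, MeasurePreserving (fun T : X => v +ᵥ T) ν ν) → ν = μ)
    (α : X → Euc d → Euc d)
    (hαcont : Continuous fun p : X × Euc d => α p.1 p.2)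
    (hcoc : ∀ (T : X) (v w : Euc d), α T (v + w) = α T v + α (v +ᵥ T) w)
    (lam C : ℝ) (hlam : 1 ≤ lam)
    (hlow : ∀ (T : X) (v : Euc d), lam⁻¹ * ‖v‖ - C ≤ ‖α T v‖)
    (hup : ∀ (T : X) (v : Euc d), ‖α T v‖ ≤ lam * ‖v‖ + C) :
    ∃ L : Euc d →ₗ[ℝ] Euc d,
      (∀ v : Euc d, L v = ∫ T, α T v ∂μ) ∧ Function.Bijective L := by
  have hα : IsDynamicalCocycle α := hcoc
  have hmeas : ∀ v, StronglyMeasurable fun T => α T v := fun v =>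
    (hαcont.comp (Continuous.prodMk_left v)).stronglyMeasurable
  have hint : ∀ v, Integrable (fun T => α T v) μ := fun v =>
    Integrable.of_bound (hmeas v).aestronglyMeasurable _ (ae_of_all _ (hup · v))
  let A : Euc d →+ Euc d := AddMonoidHom.mk' (fun v => ∫ T, α T v ∂μ) (hα.integral_add hinv hint)
  have hA_le : ∀ v, ‖A v‖ ≤ lam * ‖v‖ := A.norm_le_mul_of_norm_le_mul_add fun v => by
    simpa [A] using norm_integral_le_of_norm_le_const (μ := μ) (ae_of_all _ (hup · v))
  let L := (A.toRealLinearMap (AddMonoidHomClass.continuous_of_bound A lam hA_le)).toLinearMap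
  have hinj : Injective L := (injective_iff_map_eq_zero L).2 fun v hv => by
    have hv_le := hα.mul_norm_le_norm_integral ⟨hinv, huniq⟩ hmeas hlow hup v
    change _ ≤ ‖L v‖ at hv_le
    rw [hv, norm_zero] at hv_le
    exact norm_eq_zero.1 ((nonpos_of_mul_nonpos_right hv_le (inv_pos.2 (zero_lt_one.trans_le hlam))).antisymm
      (norm_nonneg v))
  exact ⟨L, fun v => rfl, hinj, LinearMap.injective_iff_surjective.1 hinj⟩

/-- The Ruelle–Sullivan image of a bi-Lipschitz-at-large-scale cocycle over a
uniquely ergodic `ℝ^d`-action is an invertible linear map. -/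
theorem ruelle_sullivan_invertible
    (d : ℕ) (hd : 1 ≤ d)
    (X : Type*) [MetricSpace X] [CompactSpace X] [Nonempty X]
    [MeasurableSpace X] [BorelSpace X]
    [AddAction (Euc d) X] [ContinuousVAdd (Euc d) X]
    (μ : Measure X) [IsProbabilityMeasure μ]
    (hinv : ∀ v : Euc d, MeasurePreserving (fun T : X => v +ᵥ T) μ μ)
    (huniq : ∀ ν : Measure X, IsProbabilityMeasure ν →
      (∀ v : Euc d, MeasurePreserving (fun T : X => v +ᵥ T) ν ν) → ν = μ)
    (α : X → Euc d → Euc d)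
    (hαcont : Continuous fun p : X × Euc d => α p.1 p.2)
    (hcoc : ∀ (T : X) (v w : Euc d), α T (v + w) = α T v + α (v +ᵥ T) w)
    (lam C : ℝ) (hlam : 1 ≤ lam) (hC : 0 ≤ C)
    (hlow : ∀ (T : X) (v : Euc d), lam⁻¹ * ‖v‖ - C ≤ ‖α T v‖)
    (hup : ∀ (T : X) (v : Euc d), ‖α T v‖ ≤ lam * ‖v‖ + C) :
    ∃ L : Euc d →ₗ[ℝ] Euc d,
      (∀ v : Euc d, L v = ∫ T, α T v ∂μ) ∧ Function.Bijective L :=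
  ruelle_sullivan_invertible_general d X μ hinv huniq α hαcont hcoc lam C hlam hlow hup
end

section
/- Let d ≥ 1 and let α : ℝ^d × ℝ^d → ℝ^d be continuous and satisfy the cocycle identity α(x, v+w) = α(x,v) + α(x+v, w). Suppose there exist λ ≥ 1 and C ≥ 0 with λ⁻¹‖v‖ − C ≤ ‖α(x,v)‖ ≤ λ‖v‖ + C for all x, v ∈ ℝ^d. Let A : ℝ^d → ℝ^d be an ℝ-linear map such that for every ε > 0 there exists r > 0 with ‖r^{−d} ∫_{C_r} α(x+s, v) ds − A(v)‖ ≤ ε·max(‖v‖, 1) for all x, v ∈ ℝ^d. Then A is bijective. -/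
open MeasureTheory

/-- The cube `[-r/2, r/2]^d` in `ℝ^d`. -/
def cube (d : ℕ) (r : ℝ) : Set (Euc d) :=
  {s | ∀ i, s i ∈ Set.Icc (-(r / 2)) (r / 2)}

/-!
The cocycle identity gives `α 0 s + α s w = α 0 (s + w) = α 0 w + α w s`, so the cube average of
`s ↦ α s w` differs from `α 0 w` by at most twice the bound of `α` on the cube, uniformly in `w`.
For `w` in the kernel of `A` the average is at most `ε max ‖w‖ 1`; with `ε = (2λ)⁻¹` the lower
bound `λ⁻¹ ‖w‖ - C ≤ ‖α 0 w‖` then bounds `‖w‖` on the kernel, which is therefore trivial.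
-/

section Average

variable {X E : Type*} [MeasurableSpace X] {μ : Measure X} {s : Set X}
  [NormedAddCommGroup E] [NormedSpace ℝ E] {f : X → E}

theorem setAverage_const_add [CompleteSpace E] (hs₀ : μ s ≠ 0) (hs : μ s ≠ ⊤)
    (hf : IntegrableOn f s μ) (c : E) :
    ⨍ x in s, (c + f x) ∂μ = c + ⨍ x in s, f x ∂μ := by
  have := NeZero.mk hs₀; have := Fact.mk hs.lt_top
  rw [average, integral_add (integrable_const c) hf.to_average]
  exact congrArg (· + _) (average_const _ c)

theorem norm_setAverage_le_of_norm_le_const {C : ℝ} (hs₀ : μ s ≠ 0) (hs : μ s ≠ ⊤)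
    (hC : ∀ x ∈ s, ‖f x‖ ≤ C) : ‖⨍ x in s, f x ∂μ‖ ≤ C := by
  have hpos : 0 < μ.real s := ENNReal.toReal_pos hs₀ hs
  rw [setAverage_eq, norm_smul, norm_inv, Real.norm_of_nonneg hpos.le, inv_mul_le_iff₀ hpos,
    mul_comm]
  exact norm_setIntegral_le_of_norm_le_const hs.lt_top hC

end Average

theorem cube_subset_closedBall (d : ℕ) {r : ℝ} (hr : 0 ≤ r) :
    cube d r ⊆ Metric.closedBall 0 (√d * (r / 2)) := by
  rw [EuclideanSpace.closedBall_zero_eq _ (by positivity)]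
  intro s hs
  calc ∑ i, s i ^ 2 ≤ ∑ _i : Fin d, (r / 2) ^ 2 :=
        Finset.sum_le_sum fun i _ => sq_le_sq' (hs i).1 (hs i).2
    _ = (√d * (r / 2)) ^ 2 := by simp [mul_pow]

theorem isCompact_cube (d : ℕ) {r : ℝ} (hr : 0 ≤ r) : IsCompact (cube d r) := by
  refine Metric.isCompact_of_isClosed_isBounded ?_
    (Metric.isBounded_closedBall.subset (cube_subset_closedBall d hr))
  simp only [cube, Set.ofPred_forall]
  exact isClosed_iInter fun i => isClosed_Icc.preimage (EuclideanSpace.proj i).continuous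

theorem volume_cube (d : ℕ) (r : ℝ) :
    volume (cube d r) = ENNReal.ofReal r ^ d := by
  have : cube d r = (MeasurableEquiv.toLp 2 (Fin d → ℝ)).symm ⁻¹'
      Set.univ.pi fun _ => Set.Icc (-(r / 2)) (r / 2) := by
    ext s
    exact ⟨fun h i _ => h i, fun h i => h i trivial⟩
  rw [this, (EuclideanSpace.volume_preserving_symm_measurableEquiv_toLp (Fin d)).measure_preimage
      (by measurability), volume_pi_pi]
  simp [Real.volume_Icc]

theorem setAverage_cube (d : ℕ) {r : ℝ} (hr : 0 ≤ r) (f : Euc d → Euc d) :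
    ⨍ s in cube d r, f s = (r ^ d)⁻¹ • ∫ s in cube d r, f s := by
  rw [setAverage_eq, measureReal_def, volume_cube, ENNReal.toReal_pow,
    ENNReal.toReal_ofReal hr]

theorem cocycle_eq_add_sub {E F : Type*} [AddCommGroup E] [AddCommGroup F] {α : E → E → F}
    (hcoc : ∀ x v w, α x (v + w) = α x v + α (x + v) w) (s w : E) :
    α s w = α 0 w + (α w s - α 0 s) := by
  have h₁ := hcoc 0 s w
  have h₂ := hcoc 0 w s
  rw [zero_add, add_comm s] at h₁
  rw [zero_add, h₁] at h₂
  rw [← add_sub_assoc, ← h₂]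
  abel

theorem norm_setAverage_cocycle_sub_le {E F : Type*} [AddCommGroup E] [MeasurableSpace E]
    [NormedAddCommGroup F] [NormedSpace ℝ F] [CompleteSpace F] {α : E → E → F}
    (hcoc : ∀ x v w, α x (v + w) = α x v + α (x + v) w) {μ : Measure E} {S : Set E}
    (hS₀ : μ S ≠ 0) (hS : μ S ≠ ⊤) (hint : ∀ x, IntegrableOn (α x) S μ) {M : ℝ}
    (hM : ∀ x, ∀ s ∈ S, ‖α x s‖ ≤ M) (w : E) :
    ‖⨍ s in S, α s w ∂μ - α 0 w‖ ≤ 2 * M := by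
  have hsplit : ⨍ s in S, α s w ∂μ = α 0 w + ⨍ s in S, (α w s - α 0 s) ∂μ := by
    rw [← setAverage_const_add hS₀ hS (f := fun s => α w s - α 0 s) ((hint w).sub (hint 0))]
    exact congrArg _ (funext fun s => cocycle_eq_add_sub hcoc s w)
  rw [hsplit, add_sub_cancel_left]
  refine norm_setAverage_le_of_norm_le_const hS₀ hS fun s hs => ?_
  calc ‖α w s - α 0 s‖ ≤ ‖α w s‖ + ‖α 0 s‖ := norm_sub_le _ _
    _ ≤ 2 * M := by linarith [hM w s hs, hM 0 s hs]

theorem norm_le_of_norm_setAverage_cocycle_le {E F : Type*} [NormedAddCommGroup E]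
    [MeasurableSpace E] [NormedAddCommGroup F] [NormedSpace ℝ F] [CompleteSpace F]
    {α : E → E → F} (hcoc : ∀ x v w, α x (v + w) = α x v + α (x + v) w) {μ : Measure E}
    {S : Set E} (hS₀ : μ S ≠ 0) (hS : μ S ≠ ⊤) (hint : ∀ x, IntegrableOn (α x) S μ) {M : ℝ}
    (hM : ∀ x, ∀ s ∈ S, ‖α x s‖ ≤ M) {lam C : ℝ} (hlam : 0 < lam)
    (hlow : ∀ v, lam⁻¹ * ‖v‖ - C ≤ ‖α 0 v‖) {w : E}
    (havg : ‖⨍ s in S, α s w ∂μ‖ ≤ (2 * lam)⁻¹ * max ‖w‖ 1) :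
    ‖w‖ ≤ 2 * lam * (C + 2 * M) + 1 := by
  have key : lam⁻¹ * ‖w‖ - C ≤ (2 * lam)⁻¹ * (‖w‖ + 1) + 2 * M :=
    calc lam⁻¹ * ‖w‖ - C ≤ ‖α 0 w‖ := hlow w
      _ ≤ ‖⨍ s in S, α s w ∂μ‖ + ‖⨍ s in S, α s w ∂μ - α 0 w‖ := norm_le_norm_add_norm_sub _ _
      _ ≤ (2 * lam)⁻¹ * (‖w‖ + 1) + 2 * M := by
        refine add_le_add (havg.trans ?_) (norm_setAverage_cocycle_sub_le hcoc hS₀ hS hint hM w)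
        gcongr
        exact max_le_add_of_nonneg (norm_nonneg w) zero_le_one
  field_simp at key
  linarith

theorem Submodule.eq_bot_of_forall_norm_le {E : Type*} [NormedAddCommGroup E] [NormedSpace ℝ E]
    (p : Submodule ℝ E) {B : ℝ} (h : ∀ w ∈ p, ‖w‖ ≤ B) : p = ⊥ := by
  refine (Submodule.eq_bot_iff p).2 fun v hv => ?_
  by_contra hv₀
  have hpos : 0 < ‖v‖ := norm_pos_iff.2 hv₀
  have := h (((|B| + 1) / ‖v‖) • v) (p.smul_mem _ hv)
  rw [norm_smul, Real.norm_of_nonneg (by positivity), div_mul_cancel₀ _ hpos.ne'] at this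
  linarith [le_abs_self B]

theorem limit_of_cube_averages_bijective_general
    (d : ℕ)
    (α : Euc d → Euc d → Euc d)
    (hαcont : Continuous fun p : Euc d × Euc d => α p.1 p.2)
    (hcoc : ∀ x v w : Euc d, α x (v + w) = α x v + α (x + v) w)
    (lam C : ℝ) (hlam : 1 ≤ lam)
    (hlow : ∀ x v : Euc d, lam⁻¹ * ‖v‖ - C ≤ ‖α x v‖)
    (hup : ∀ x v : Euc d, ‖α x v‖ ≤ lam * ‖v‖ + C)
    (A : Euc d →ₗ[ℝ] Euc d)
    (hA : ∀ ε : ℝ, 0 < ε → ∃ r : ℝ, 0 < r ∧ ∀ x v : Euc d,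
      ‖(r ^ d)⁻¹ • (∫ s in cube d r, α (x + s) v) - A v‖ ≤ ε * max ‖v‖ 1) :
    Function.Bijective A := by
  have hlam₀ : 0 < lam := by linarith
  obtain ⟨r, hr, hAr⟩ := hA (2 * lam)⁻¹ (by positivity)
  obtain ⟨M, hM⟩ : ∃ M, ∀ x, ∀ s ∈ cube d r, ‖α x s‖ ≤ M :=
    ⟨lam * (√d * (r / 2)) + C, fun x s hs =>
      (hup x s).trans (by gcongr; simpa using cube_subset_closedBall d hr.le hs)⟩
  have hint : ∀ x, IntegrableOn (α x) (cube d r) :=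
    fun x => (hαcont.comp (Continuous.prodMk_right x)).continuousOn.integrableOn_compact
      (isCompact_cube d hr.le)
  have hker : ∀ w ∈ LinearMap.ker A, ‖w‖ ≤ 2 * lam * (C + 2 * M) + 1 := fun w hw =>
    norm_le_of_norm_setAverage_cocycle_le hcoc (by simp [volume_cube, hr])
      (isCompact_cube d hr.le).measure_lt_top.ne hint hM hlam₀ (hlow 0)
      (by simpa [setAverage_cube d hr.le, LinearMap.mem_ker.mp hw] using hAr 0 w)
  have hinj : Function.Injective A :=
    LinearMap.ker_eq_bot.mp (Submodule.eq_bot_of_forall_norm_le _ hker)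
  exact ⟨hinj, LinearMap.injective_iff_surjective.mp hinj⟩

/-- If a continuous cocycle on `ℝ^d` is bi-Lipschitz at large scale and its cube averages
converge uniformly to a linear map `A`, then `A` is bijective. -/
theorem limit_of_cube_averages_bijective
    (d : ℕ) (hd : 1 ≤ d)
    (α : Euc d → Euc d → Euc d)
    (hαcont : Continuous fun p : Euc d × Euc d => α p.1 p.2)
    (hcoc : ∀ x v w : Euc d, α x (v + w) = α x v + α (x + v) w)
    (lam C : ℝ) (hlam : 1 ≤ lam) (hC : 0 ≤ C)
    (hlow : ∀ x v : Euc d, lam⁻¹ * ‖v‖ - C ≤ ‖α x v‖)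
    (hup : ∀ x v : Euc d, ‖α x v‖ ≤ lam * ‖v‖ + C)
    (A : Euc d →ₗ[ℝ] Euc d)
    (hA : ∀ ε : ℝ, 0 < ε → ∃ r : ℝ, 0 < r ∧ ∀ x v : Euc d,
      ‖(r ^ d)⁻¹ • (∫ s in cube d r, α (x + s) v) - A v‖ ≤ ε * max ‖v‖ 1) :
    Function.Bijective A :=
  limit_of_cube_averages_bijective_general d α hαcont hcoc lam C hlam hlow hup A hA
end

section
/- Let d ≥ 1, let X be a nonempty compact topological space equipped with an additive action of ℝ^d (written (v,T) ↦ v +ᵥ T), and let α : X × ℝ^d → ℝ^d be a continuous dynamical cocycle. Then there exists λ > 0 such that ‖α(T,v)‖ ≤ λ(‖v‖ + 1) for all T ∈ X and all v ∈ ℝ^d. -/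
open MeasureTheory

/-- A continuous cocycle over an `ℝ^d`-action on a nonempty compact space grows at most
linearly, uniformly over the space. -/
theorem cocycle_linear_growth
    (d : ℕ) (hd : 1 ≤ d)
    (X : Type*) [TopologicalSpace X] [CompactSpace X] [Nonempty X]
    [AddAction (Euc d) X]
    (α : X → Euc d → Euc d)
    (hαcont : Continuous fun p : X × Euc d => α p.1 p.2)
    (hcoc : ∀ (T : X) (v w : Euc d), α T (v + w) = α T v + α (v +ᵥ T) w) :
    ∃ lam : ℝ, 0 < lam ∧ ∀ (T : X) (v : Euc d), ‖α T v‖ ≤ lam * (‖v‖ + 1) := by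
  -- α T 0 = 0
  have hzero : ∀ T : X, α T 0 = 0 := by
    intro T
    have h := hcoc T 0 0
    simp only [add_zero, zero_vadd] at h
    exact (left_eq_add.mp h)
  -- compact set K = X × closedBall 0 1
  have hK : IsCompact ((Set.univ : Set X) ×ˢ Metric.closedBall (0 : Euc d) 1) :=
    isCompact_univ.prod (isCompact_closedBall 0 1)
  have hKne : ((Set.univ : Set X) ×ˢ Metric.closedBall (0 : Euc d) 1).Nonempty := by
    obtain ⟨T⟩ := (inferInstance : Nonempty X)
    exact ⟨(T, 0), Set.mem_univ T, by simp⟩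
  obtain ⟨p, hpK, hp⟩ := hK.exists_isMaxOn hKne
    (hαcont.norm.continuousOn)
  set C := ‖α p.1 p.2‖ with hC
  have hC0 : 0 ≤ C := norm_nonneg _
  have hbound : ∀ (T : X) (w : Euc d), ‖w‖ ≤ 1 → ‖α T w‖ ≤ C := by
    intro T w hw
    exact hp (a := (T, w)) ⟨Set.mem_univ T, by simpa [Metric.mem_closedBall, dist_zero_right] using hw⟩
  -- key: ‖v‖ ≤ n → ‖α T v‖ ≤ n * C
  have key : ∀ n : ℕ, ∀ (T : X) (v : Euc d), ‖v‖ ≤ n → ‖α T v‖ ≤ n * C := by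
    intro n
    induction n with
    | zero =>
      intro T v hv
      have : v = 0 := by
        have := norm_nonneg v
        simpa using norm_le_zero_iff.mp (by simpa using hv)
      simp [this, hzero]
    | succ n ih =>
      intro T v hv
      by_cases hvn : ‖v‖ ≤ n
      · calc ‖α T v‖ ≤ n * C := ih T v hvn
          _ ≤ (n + 1 : ℕ) * C := by
            apply mul_le_mul_of_nonneg_right _ hC0
            exact_mod_cast Nat.le_succ n
      · push_neg at hvn
        have hvpos : (0:ℝ) < ‖v‖ := lt_of_le_of_lt (Nat.cast_nonneg n) hvn
        set u := ((n : ℝ) / ‖v‖) • v with hu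
        set w := v - u with hw
        have hun : ‖u‖ = n := by
          rw [hu, norm_smul]
          rw [Real.norm_eq_abs, abs_div, abs_of_nonneg (Nat.cast_nonneg n),
            abs_of_pos hvpos]
          field_simp
        have hwn : ‖w‖ ≤ 1 := by
          have : w = (1 - (n:ℝ)/‖v‖) • v := by
            rw [hw, hu, sub_smul, one_smul]
          rw [this, norm_smul, Real.norm_eq_abs]
          have h1 : (n:ℝ)/‖v‖ ≤ 1 := by
            rw [div_le_one hvpos]; exact hvn.le
          have h2 : 0 ≤ 1 - (n:ℝ)/‖v‖ := by linarith
          rw [abs_of_nonneg h2]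
          have : (1 - (n:ℝ)/‖v‖) * ‖v‖ = ‖v‖ - n := by field_simp
          rw [this]
          have : ‖v‖ ≤ n + 1 := by exact_mod_cast hv
          linarith
        have hsplit : v = u + w := by rw [hw]; abel
        calc ‖α T v‖ = ‖α T u + α (u +ᵥ T) w‖ := by rw [hsplit, hcoc]
          _ ≤ ‖α T u‖ + ‖α (u +ᵥ T) w‖ := norm_add_le _ _
          _ ≤ n * C + C := add_le_add (ih T u hun.le) (hbound _ _ hwn)
          _ = (n + 1 : ℕ) * C := by push_cast; ring
  refine ⟨C + 1, by linarith, fun T v => ?_⟩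
  set n := ⌈‖v‖⌉₊ with hn
  have h1 : ‖v‖ ≤ n := Nat.le_ceil _
  have h2 : (n : ℝ) ≤ ‖v‖ + 1 := by
    have := Nat.ceil_lt_add_one (norm_nonneg v)
    exact_mod_cast this.le
  calc ‖α T v‖ ≤ n * C := key n T v h1
    _ ≤ (‖v‖ + 1) * C := mul_le_mul_of_nonneg_right h2 hC0
    _ ≤ (C + 1) * (‖v‖ + 1) := by nlinarith [norm_nonneg v]
end

section
/- Let d ≥ 1, let X be a nonempty compact topological space equipped with an additive action of ℝ^d (written (v,T) ↦ v +ᵥ T), and let α : X × ℝ^d → ℝ^d be a continuous dynamical cocycle. Suppose there is a continuous map β : X × ℝ^d → ℝ^d such that β(T, α(T,v)) = v and α(T, β(T,w)) = w for all T ∈ X and v, w ∈ ℝ^d (i.e., each α(T,·) is a homeomorphism of ℝ^d with fiberwise inverse β). Then there exist λ > 1 and C > 0 such that λ⁻¹‖v‖ − C ≤ ‖α(T,v)‖ ≤ λ‖v‖ + C for all T ∈ X and v ∈ ℝ^d. (This is the abstract content of the proposition that the cocycle of an orbit equivalence between tiling spaces is bi-Lipschitz at large scale.) -/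
open MeasureTheory

lemma cocycle_growth
    (d : ℕ) (X : Type*) [TopologicalSpace X] [CompactSpace X] [Nonempty X]
    (f : X → Euc d → Euc d)
    (hf : Continuous fun p : X × Euc d => f p.1 p.2)
    (hcoc : ∀ (T : X) (v w : Euc d), ∃ T' : X, f T (v + w) = f T v + f T' w) :
    ∃ M : ℝ, 0 ≤ M ∧ ∀ (T : X) (v : Euc d), ‖f T v‖ ≤ M * (‖v‖ + 1) := by
  have hK : IsCompact ((Set.univ : Set X) ×ˢ Metric.closedBall (0 : Euc d) 1) :=
    isCompact_univ.prod (isCompact_closedBall _ _)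
  obtain ⟨M, hM⟩ := hK.exists_bound_of_continuousOn (hf.continuousOn)
  have hM0 : 0 ≤ M := le_trans (norm_nonneg (f (Classical.arbitrary X) 0))
    (hM (Classical.arbitrary X, 0) ⟨trivial, by simp⟩)
  have hball : ∀ (T : X) (v : Euc d), ‖v‖ ≤ 1 → ‖f T v‖ ≤ M := by
    intro T v hv
    exact hM (T, v) ⟨trivial, by simpa [Metric.mem_closedBall] using hv⟩
  have key : ∀ (n : ℕ) (T : X) (v : Euc d), ‖v‖ ≤ n + 1 → ‖f T v‖ ≤ M * (n + 1) := by
    intro n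
    induction n with
    | zero =>
      intro T v hv
      have := hball T v (by simpa using hv)
      simpa using this
    | succ n ih =>
      intro T v hv
      push_cast at hv ⊢
      by_cases hvn : ‖v‖ ≤ (n : ℝ) + 1
      · have := ih T v (by exact_mod_cast hvn)
        push_cast at this
        nlinarith
      · push_neg at hvn
        have hvpos : 0 < ‖v‖ := by
          have : (0:ℝ) ≤ (n:ℝ) := Nat.cast_nonneg n
          linarith
        set u : Euc d := (((n : ℝ) + 1) / ‖v‖) • v with hu
        have hunorm : ‖u‖ = (n : ℝ) + 1 := by
          rw [hu, norm_smul, Real.norm_eq_abs, abs_of_nonneg (by positivity)]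
          field_simp
        have hwnorm : ‖v - u‖ ≤ 1 := by
          have heq : v - u = (1 - ((n : ℝ) + 1) / ‖v‖) • v := by
            rw [hu]; module
          rw [heq, norm_smul, Real.norm_eq_abs, abs_of_nonneg]
          · have h3 : (1 - ((n : ℝ) + 1) / ‖v‖) * ‖v‖ = ‖v‖ - ((n : ℝ) + 1) := by
              field_simp
            rw [h3]; linarith
          · rw [sub_nonneg, div_le_one hvpos]; linarith
        obtain ⟨T', hT'⟩ := hcoc T u (v - u)
        rw [add_sub_cancel] at hT'
        have h1 : ‖f T u‖ ≤ M * ((n : ℝ) + 1) := ih T u (le_of_eq hunorm)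
        calc ‖f T v‖ = ‖f T u + f T' (v - u)‖ := by rw [hT']
          _ ≤ ‖f T u‖ + ‖f T' (v - u)‖ := norm_add_le _ _
          _ ≤ M * ((n : ℝ) + 1) + M := add_le_add h1 (hball _ _ hwnorm)
          _ = M * ((n : ℝ) + 1 + 1) := by ring
  refine ⟨M, hM0, fun T v => ?_⟩
  have h1 : ‖v‖ ≤ (⌊‖v‖⌋₊ : ℝ) + 1 := le_of_lt (Nat.lt_floor_add_one _)
  have h2 : (⌊‖v‖⌋₊ : ℝ) ≤ ‖v‖ := Nat.floor_le (norm_nonneg v)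
  calc ‖f T v‖ ≤ M * (⌊‖v‖⌋₊ + 1) := key _ T v h1
    _ ≤ M * (‖v‖ + 1) := by nlinarith

/-- A continuous cocycle over an `ℝ^d`-action on a nonempty compact space, whose fibers are
homeomorphisms of `ℝ^d` with continuous fiberwise inverse, is bi-Lipschitz at large scale. -/
theorem cocycle_almost_bilipschitz
    (d : ℕ) (hd : 1 ≤ d)
    (X : Type*) [TopologicalSpace X] [CompactSpace X] [Nonempty X]
    [AddAction (Euc d) X]
    (α : X → Euc d → Euc d)
    (hαcont : Continuous fun p : X × Euc d => α p.1 p.2)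
    (hcoc : ∀ (T : X) (v w : Euc d), α T (v + w) = α T v + α (v +ᵥ T) w)
    (β : X → Euc d → Euc d)
    (hβcont : Continuous fun p : X × Euc d => β p.1 p.2)
    (hβα : ∀ (T : X) (v : Euc d), β T (α T v) = v)
    (hαβ : ∀ (T : X) (w : Euc d), α T (β T w) = w) :
    ∃ lam C : ℝ, 1 < lam ∧ 0 < C ∧ ∀ (T : X) (v : Euc d),
      lam⁻¹ * ‖v‖ - C ≤ ‖α T v‖ ∧ ‖α T v‖ ≤ lam * ‖v‖ + C := by
  have hαinj : ∀ T : X, Function.Injective (α T) := fun T =>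
    Function.LeftInverse.injective (hβα T)
  have hβcoc : ∀ (T : X) (v w : Euc d), β T (v + w) = β T v + β (β T v +ᵥ T) w := by
    intro T v w
    apply hαinj T
    rw [hαβ, hcoc, hαβ, hαβ]
  obtain ⟨Ma, hMa0, hMa⟩ := cocycle_growth d X α hαcont (fun T v w => ⟨v +ᵥ T, hcoc T v w⟩)
  obtain ⟨Mb, hMb0, hMb⟩ := cocycle_growth d X β hβcont (fun T v w => ⟨β T v +ᵥ T, hβcoc T v w⟩)
  refine ⟨Ma + Mb + 2, Ma + Mb + 2, by linarith, by linarith, fun T v => ?_⟩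
  set lam := Ma + Mb + 2 with hlam
  have hlam1 : (1:ℝ) ≤ lam := by simp [hlam]; linarith
  have hlampos : (0:ℝ) < lam := by linarith
  constructor
  · -- lower bound
    have hb := hMb T (α T v)
    rw [hβα] at hb
    have hv : ‖v‖ ≤ lam * ‖α T v‖ + lam := by
      have : Mb * (‖α T v‖ + 1) ≤ lam * ‖α T v‖ + lam := by
        have := norm_nonneg (α T v); nlinarith
      linarith
    have : lam⁻¹ * ‖v‖ ≤ ‖α T v‖ + 1 := by
      rw [inv_mul_le_iff₀ hlampos]
      calc ‖v‖ ≤ lam * ‖α T v‖ + lam := hv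
        _ ≤ lam * (‖α T v‖ + 1) := by ring_nf; linarith
    linarith
  · have ha := hMa T v
    have := norm_nonneg v
    nlinarith
end

section
/- (Gottschalk–Hedlund for ℝ^d-actions.) Let d ≥ 1 and let X be a nonempty compact metric space equipped with a continuous additive action of ℝ^d (written (v,T) ↦ v +ᵥ T) that is minimal, i.e. every orbit {v +ᵥ T : v ∈ ℝ^d} is dense in X. Let α : X × ℝ^d → ℝ^d be a continuous dynamical cocycle. Then the following are equivalent: (i) α is a coboundary, i.e. there exists a continuous map s : X → ℝ^d such that α(T,v) = s(v +ᵥ T) − s(T) for all T ∈ X and v ∈ ℝ^d; (ii) there exist T₀ ∈ X and B ≥ 0 such that ‖α(T₀, v)‖ ≤ B for all v ∈ ℝ^d. -/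
set_option maxHeartbeats 1000000 in
/-- Gottschalk–Hedlund theorem for `ℝ^d`-actions: a continuous cocycle over a minimal
continuous `ℝ^d`-action on a nonempty compact metric space is a coboundary if and only if
it is bounded along some orbit. -/
theorem gottschalk_hedlund
    (d : ℕ) (hd : 1 ≤ d)
    (X : Type*) [MetricSpace X] [CompactSpace X] [Nonempty X]
    [AddAction (Euc d) X] [ContinuousVAdd (Euc d) X]
    (hmin : ∀ T : X, Dense (Set.range fun v : Euc d => v +ᵥ T))
    (α : X → Euc d → Euc d)
    (hαcont : Continuous fun p : X × Euc d => α p.1 p.2)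
    (hcoc : ∀ (T : X) (v w : Euc d), α T (v + w) = α T v + α (v +ᵥ T) w) :
    (∃ s : X → Euc d, Continuous s ∧
        ∀ (T : X) (v : Euc d), α T v = s (v +ᵥ T) - s T) ↔
    (∃ (T₀ : X) (B : ℝ), 0 ≤ B ∧ ∀ v : Euc d, ‖α T₀ v‖ ≤ B) := by
  constructor
  · rintro ⟨s, hs, hsa⟩
    obtain ⟨x₀, -, hx₀⟩ := isCompact_univ.exists_isMaxOn Set.univ_nonempty
      (hs.norm.continuousOn)
    refine ⟨Classical.arbitrary X, 2 * ‖s x₀‖, by positivity, fun v => ?_⟩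
    rw [hsa]
    calc ‖s (v +ᵥ Classical.arbitrary X) - s (Classical.arbitrary X)‖
        ≤ ‖s (v +ᵥ Classical.arbitrary X)‖ + ‖s (Classical.arbitrary X)‖ := norm_sub_le _ _
      _ ≤ ‖s x₀‖ + ‖s x₀‖ := add_le_add (hx₀ (Set.mem_univ _)) (hx₀ (Set.mem_univ _))
      _ = 2 * ‖s x₀‖ := by ring
  · rintro ⟨T₀, B, hB, hα⟩
    -- basic cocycle facts
    have hα0 : ∀ T : X, α T 0 = 0 := by
      intro T
      have h := hcoc T 0 0
      rw [add_zero, zero_vadd] at h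
      exact (left_eq_add.mp h)
    -- the skew-product action
    set act : Euc d → X × Euc d → X × Euc d :=
      fun v p => (v +ᵥ p.1, p.2 + α p.1 v) with hact_def
    have hact_cont : ∀ v, Continuous (act v) := by
      intro v
      refine Continuous.prodMk (continuous_const.vadd continuous_fst) ?_
      exact continuous_snd.add (hαcont.comp (continuous_fst.prodMk continuous_const))
    have hact_comp : ∀ v w p, act w (act v p) = act (v + w) p := by
      intro v w p
      refine Prod.ext ?_ ?_
      · show w +ᵥ (v +ᵥ p.1) = (v + w) +ᵥ p.1
        rw [add_comm, add_vadd]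
      · show p.2 + α p.1 v + α (v +ᵥ p.1) w = p.2 + α p.1 (v + w)
        rw [hcoc, add_assoc]
    -- the orbit closure K
    set K : Set (X × Euc d) := closure (Set.range fun v => act v (T₀, 0)) with hK_def
    have hKsub : K ⊆ Set.univ ×ˢ Metric.closedBall (0 : Euc d) B := by
      apply closure_minimal
      · rintro p ⟨v, rfl⟩
        refine ⟨trivial, ?_⟩
        simp only [act, Metric.mem_closedBall, dist_zero_right, zero_add]
        exact hα v
      · exact isClosed_univ.prod Metric.isClosed_closedBall
    have hKclosed : IsClosed K := isClosed_closure
    have hKcompact : IsCompact K :=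
      (isCompact_univ.prod (isCompact_closedBall _ _)).of_isClosed_subset hKclosed hKsub
    have hKinv : ∀ v, act v '' K ⊆ K := by
      intro v
      refine (image_closure_subset_closure_image (hact_cont v)).trans (closure_mono ?_)
      rintro p ⟨q, ⟨w, rfl⟩, rfl⟩
      exact ⟨w + v, (hact_comp w v _).symm⟩
    have hKne : K.Nonempty := by
      refine ⟨(T₀, 0), subset_closure ⟨0, ?_⟩⟩
      simp [act, hα0]
    -- Zorn: a minimal nonempty closed invariant subset M of K
    set S : Set (Set (X × Euc d)) :=
      {M | M ⊆ K ∧ M.Nonempty ∧ IsClosed M ∧ ∀ v, act v '' M ⊆ M} with hS_def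
    obtain ⟨M, -, hMmin⟩ : ∃ M, M ⊆ K ∧ Minimal (· ∈ S) M := by
      refine zorn_superset_nonempty S ?_ K ⟨subset_rfl, hKne, hKclosed, hKinv⟩
      intro c hcS hchain hcne
      have hcompact : ∀ M : c, IsCompact (M : Set (X × Euc d)) := fun M =>
        hKcompact.of_isClosed_subset (hcS M.2).2.2.1 (hcS M.2).1
      have hint : (⋂ M : c, (M : Set (X × Euc d))).Nonempty := by
        have : Nonempty c := hcne.to_subtype
        refine IsCompact.nonempty_iInter_of_directed_nonempty_isCompact_isClosed _
          ?_ (fun M => (hcS M.2).2.1) hcompact (fun M => (hcS M.2).2.2.1)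
        intro i j
        rcases eq_or_ne (i : Set (X × Euc d)) j with h | h
        · exact ⟨i, subset_rfl, h.le⟩
        · rcases hchain i.2 j.2 h with h' | h'
          · exact ⟨i, subset_rfl, h'⟩
          · exact ⟨j, h', subset_rfl⟩
      obtain ⟨M₀⟩ := hcne.to_subtype
      refine ⟨⋂ M : c, (M : Set (X × Euc d)), ⟨(Set.iInter_subset _ M₀).trans (hcS M₀.2).1,
        hint, isClosed_iInter (fun M => (hcS M.2).2.2.1), ?_⟩,
        fun s hs => Set.iInter_subset_of_subset ⟨s, hs⟩ subset_rfl⟩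
      intro v
      refine (Set.image_iInter_subset _ _).trans ?_
      exact Set.iInter_mono fun M => (hcS M.2).2.2.2 v
    obtain ⟨hMK, hMne, hMclosed, hMinv⟩ := hMmin.1
    have hMcompact : IsCompact M := hKcompact.of_isClosed_subset hMclosed hMK
    -- surjectivity of the first projection
    have hfst : ∀ T : X, ∃ y, (T, y) ∈ M := by
      have hPclosed : IsClosed (Prod.fst '' M) :=
        (hMcompact.image continuous_fst).isClosed
      obtain ⟨⟨T₁, y₁⟩, hp₁⟩ := hMne
      have horb : Set.range (fun v : Euc d => v +ᵥ T₁) ⊆ Prod.fst '' M := by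
        rintro _ ⟨v, rfl⟩
        exact ⟨act v (T₁, y₁), hMinv v ⟨_, hp₁, rfl⟩, rfl⟩
      have : (Set.univ : Set X) ⊆ Prod.fst '' M := by
        rw [← (hmin T₁).closure_eq]
        exact closure_minimal horb hPclosed
      intro T
      obtain ⟨⟨T', y⟩, hm, h⟩ := this (Set.mem_univ T)
      exact ⟨y, by rwa [← h]⟩
    -- uniqueness over each fiber
    have hbound : ∀ p ∈ M, ‖p.2‖ ≤ B := by
      intro p hp
      have := hKsub (hMK hp)
      simpa [Metric.mem_closedBall, dist_zero_right] using this.2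
    have huniq : ∀ (T : X) (a b : Euc d), (T, a) ∈ M → (T, b) ∈ M → a = b := by
      intro T a b ha hb
      by_contra hab
      set c : Euc d := b - a with hc_def
      have hc : c ≠ 0 := sub_ne_zero_of_ne (Ne.symm hab)
      set φ : X × Euc d → X × Euc d := fun p => (p.1, p.2 + c) with hφ_def
      have hφcont : Continuous φ := continuous_fst.prodMk (continuous_snd.add continuous_const)
      have hφcomm : ∀ v p, act v (φ p) = φ (act v p) := by
        intro v p
        refine Prod.ext rfl ?_
        show p.2 + c + α p.1 v = p.2 + α p.1 v + c
        abel
      have hsubS : M ∩ φ '' M ∈ S := by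
        refine ⟨(Set.inter_subset_left).trans hMK, ⟨(T, b), hb, ⟨(T, a), ha,
          Prod.ext rfl (add_sub_cancel a b)⟩⟩, hMclosed.inter (hMcompact.image hφcont).isClosed, ?_⟩
        intro v
        refine (Set.image_inter_subset _ _ _).trans (Set.inter_subset_inter (hMinv v) ?_)
        rintro _ ⟨_, ⟨p, hp, rfl⟩, rfl⟩
        exact ⟨act v p, hMinv v ⟨p, hp, rfl⟩, (hφcomm v p).symm⟩
      have hMsub : M ⊆ φ '' M :=
        (hMmin.2 hsubS Set.inter_subset_left).trans Set.inter_subset_right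
      have hiter : ∀ n : ℕ, (T, b - n • c) ∈ M := by
        intro n
        induction n with
        | zero => simpa using hb
        | succ n ih =>
          obtain ⟨⟨T', y⟩, hy, h⟩ := hMsub ih
          have h1 : T' = T := congrArg Prod.fst h
          have h2 : y + c = b - n • c := congrArg Prod.snd h
          have : y = b - (n + 1) • c := by
            rw [succ_nsmul]
            rw [eq_sub_iff_add_eq] at h2 ⊢
            rw [← h2]; abel
          rw [h1, this] at hy
          exact hy
      have hcpos : (0 : ℝ) < ‖c‖ := norm_pos_iff.mpr hc
      obtain ⟨n, hn⟩ := exists_nat_gt ((B + ‖b‖) / ‖c‖)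
      have h1 : ‖b - n • c‖ ≤ B := hbound (T, b - n • c) (hiter n)
      have h2 : (n : ℝ) * ‖c‖ > B + ‖b‖ := (div_lt_iff₀ hcpos).mp hn
      have h3 : ‖(n • c : Euc d)‖ - ‖b‖ ≤ ‖b - n • c‖ := by
        calc ‖(n • c : Euc d)‖ - ‖b‖ ≤ ‖n • c - b‖ := norm_sub_norm_le _ _
          _ = ‖b - n • c‖ := norm_sub_rev _ _
      have h4 : ‖(n • c : Euc d)‖ = n * ‖c‖ := by
        rw [← Nat.cast_smul_eq_nsmul ℝ, norm_smul, Real.norm_natCast]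
      linarith
    -- build the section s
    have : CompactSpace M := isCompact_iff_compactSpace.mp hMcompact
    have hbij : Function.Bijective (fun p : M => (p : X × Euc d).1) := by
      constructor
      · rintro ⟨⟨T, a⟩, ha⟩ ⟨⟨T', b⟩, hb⟩ h
        simp only at h
        subst h
        exact Subtype.ext (Prod.ext rfl (huniq T a b ha hb))
      · intro T
        obtain ⟨y, hy⟩ := hfst T
        exact ⟨⟨(T, y), hy⟩, rfl⟩
    set e : M ≃ X := Equiv.ofBijective _ hbij with he_def
    have he_cont : Continuous e := continuous_fst.comp continuous_subtype_val
    set h : M ≃ₜ X := he_cont.homeoOfEquivCompactToT2 with hh_def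
    set s : X → Euc d := fun T => ((h.symm T : M) : X × Euc d).2 with hs_def
    have hs_cont : Continuous s :=
      continuous_snd.comp (continuous_subtype_val.comp h.continuous_symm)
    have hs_mem : ∀ T : X, (T, s T) ∈ M := by
      intro T
      have h1 : ((h.symm T : M) : X × Euc d) ∈ M := (h.symm T).2
      have h2 : ((h.symm T : M) : X × Euc d).1 = T := h.apply_symm_apply T
      have : ((h.symm T : M) : X × Euc d) = (T, s T) := Prod.ext h2 rfl
      rwa [this] at h1
    refine ⟨s, hs_cont, fun T v => ?_⟩
    have h1 : (v +ᵥ T, s T + α T v) ∈ M := hMinv v ⟨(T, s T), hs_mem T, rfl⟩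
    have h2 := huniq (v +ᵥ T) (s T + α T v) (s (v +ᵥ T)) h1 (hs_mem (v +ᵥ T))
    rw [← h2]; abel
end

section
/- Let d ≥ 1 and let X, X₁, X₂ be sets, each equipped with an additive action of ℝ^d (all written (v,T) ↦ v +ᵥ T). Let h₁ : X → X₁ be a bijection and h₂ : X → X₂ a map, and let α₁, α₂ : X × ℝ^d → ℝ^d satisfy h_i(v +ᵥ T) = α_i(T,v) +ᵥ h_i(T) for all T ∈ X, v ∈ ℝ^d and i = 1, 2. Assume that for each T ∈ X the map α₁(T,·) : ℝ^d → ℝ^d is surjective, and that there is a map s₀ : X → ℝ^d with α₂(T,v) = α₁(T,v) + s₀(v +ᵥ T) − s₀(T) for all T, v (i.e. α₂ and α₁ differ by the coboundary of s₀). Define φ : X₁ → X₂ by φ(T′) = (−s₀(h₁⁻¹(T′))) +ᵥ h₂(h₁⁻¹(T′)). Then φ is ℝ^d-equivariant: φ(w +ᵥ T′) = w +ᵥ φ(T′) for all T′ ∈ X₁ and w ∈ ℝ^d. -/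
/-- If the cocycles of two orbit-preserving maps differ by a coboundary, then the induced
map `φ = T′ ↦ (-s₀(h₁⁻¹ T′)) +ᵥ h₂(h₁⁻¹ T′)` between the target spaces is `ℝ^d`-equivariant. -/
theorem cohomologous_cocycles_give_equivariant_map
    (d : ℕ) (hd : 1 ≤ d)
    (X X₁ X₂ : Type*)
    [AddAction (Euc d) X] [AddAction (Euc d) X₁] [AddAction (Euc d) X₂]
    (h₁ : X ≃ X₁) (h₂ : X → X₂)
    (α₁ α₂ : X → Euc d → Euc d)
    (hh₁ : ∀ (T : X) (v : Euc d), h₁ (v +ᵥ T) = α₁ T v +ᵥ h₁ T)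
    (hh₂ : ∀ (T : X) (v : Euc d), h₂ (v +ᵥ T) = α₂ T v +ᵥ h₂ T)
    (hsurj : ∀ T : X, Function.Surjective (α₁ T))
    (s₀ : X → Euc d)
    (hcob : ∀ (T : X) (v : Euc d), α₂ T v = α₁ T v + (s₀ (v +ᵥ T) - s₀ T))
    (φ : X₁ → X₂)
    (hφ : ∀ T' : X₁, φ T' = (-(s₀ (h₁.symm T'))) +ᵥ h₂ (h₁.symm T')) :
    ∀ (T' : X₁) (w : Euc d), φ (w +ᵥ T') = w +ᵥ φ T' := by
  intro T' w
  set T := h₁.symm T' with hT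
  obtain ⟨v, hv⟩ := hsurj T w
  have h1 : h₁ (v +ᵥ T) = w +ᵥ T' := by
    rw [hh₁, hv, hT, Equiv.apply_symm_apply]
  have h2 : h₁.symm (w +ᵥ T') = v +ᵥ T := by
    rw [← h1, Equiv.symm_apply_apply]
  rw [hφ, hφ, h2, hh₂, ← hT, vadd_vadd, vadd_vadd]
  congr 1
  rw [hcob, hv]
  abel
end

section
/- Let d ≥ 1 and let X, X₁, X₂ be compact Hausdorff spaces, each equipped with a continuous additive action of ℝ^d (all written (v,T) ↦ v +ᵥ T), and assume the actions on X₁ and on X₂ are free (v +ᵥ T = T implies v = 0). Let h₁ : X → X₁ and h₂ : X → X₂ be homeomorphisms, and let α₁, α₂ : X × ℝ^d → ℝ^d be maps with h_i(v +ᵥ T) = α_i(T,v) +ᵥ h_i(T) for all T ∈ X, v ∈ ℝ^d, i = 1, 2, such that for each T ∈ X the maps α₁(T,·) and α₂(T,·) are bijections of ℝ^d. Suppose there is a continuous map s₀ : X → ℝ^d with α₂(T,v) = α₁(T,v) + s₀(v +ᵥ T) − s₀(T) for all T, v. Then the map φ : X₁ → X₂ defined by φ(T′) = (−s₀(h₁⁻¹(T′)))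 +ᵥ h₂(h₁⁻¹(T′)) is a homeomorphism satisfying φ(w +ᵥ T′) = w +ᵥ φ(T′) for all T′ ∈ X₁, w ∈ ℝ^d; that is, φ is a topological conjugacy of the ℝ^d-actions on X₁ and X₂. -/
/-- Classification theorem: if two orbit equivalences out of `X` have cohomologous cocycles,
then the induced map `φ = T′ ↦ (-s₀(h₁⁻¹ T′)) +ᵥ h₂(h₁⁻¹ T′)` between the target spaces
is a topological conjugacy of the `ℝ^d`-actions. -/
theorem cohomologous_cocycles_give_conjugacy
    (d : ℕ) (hd : 1 ≤ d)
    (X X₁ X₂ : Type*)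
    [TopologicalSpace X] [CompactSpace X] [T2Space X]
    [TopologicalSpace X₁] [CompactSpace X₁] [T2Space X₁]
    [TopologicalSpace X₂] [CompactSpace X₂] [T2Space X₂]
    [AddAction (Euc d) X] [ContinuousVAdd (Euc d) X]
    [AddAction (Euc d) X₁] [ContinuousVAdd (Euc d) X₁]
    [AddAction (Euc d) X₂] [ContinuousVAdd (Euc d) X₂]
    (hfree₁ : ∀ (v : Euc d) (T : X₁), v +ᵥ T = T → v = 0)
    (hfree₂ : ∀ (v : Euc d) (T : X₂), v +ᵥ T = T → v = 0)
    (h₁ : X ≃ₜ X₁) (h₂ : X ≃ₜ X₂)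
    (α₁ α₂ : X → Euc d → Euc d)
    (hh₁ : ∀ (T : X) (v : Euc d), h₁ (v +ᵥ T) = α₁ T v +ᵥ h₁ T)
    (hh₂ : ∀ (T : X) (v : Euc d), h₂ (v +ᵥ T) = α₂ T v +ᵥ h₂ T)
    (hbij₁ : ∀ T : X, Function.Bijective (α₁ T))
    (hbij₂ : ∀ T : X, Function.Bijective (α₂ T))
    (s₀ : X → Euc d) (hs₀ : Continuous s₀)
    (hcob : ∀ (T : X) (v : Euc d), α₂ T v = α₁ T v + (s₀ (v +ᵥ T) - s₀ T))
    (φ : X₁ → X₂)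
    (hφ : ∀ T' : X₁, φ T' = (-(s₀ (h₁.symm T'))) +ᵥ h₂ (h₁.symm T')) :
    IsHomeomorph φ ∧ ∀ (T' : X₁) (w : Euc d), φ (w +ᵥ T') = w +ᵥ φ T' := by

  have hequiv : ∀ (T' : X₁) (w : Euc d), φ (w +ᵥ T') = w +ᵥ φ T' := by
    intro T' w
    set T := h₁.symm T' with hT
    obtain ⟨v, hv⟩ := (hbij₁ T).2 w
    have h1 : w +ᵥ T' = h₁ (v +ᵥ T) := by
      rw [hh₁, hv, hT, Homeomorph.apply_symm_apply]
    have h2 : h₁.symm (w +ᵥ T') = v +ᵥ T := by rw [h1, Homeomorph.symm_apply_apply]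
    rw [hφ, hφ, h2, hh₂, hcob, hv, ← hT, vadd_vadd, vadd_vadd]
    congr 1
    abel
  refine ⟨?_, hequiv⟩
  have hcont : Continuous φ := by
    have hc : Continuous fun T' : X₁ => (-(s₀ (h₁.symm T'))) +ᵥ h₂ (h₁.symm T') := by
      exact ((hs₀.comp h₁.continuous_symm).neg).vadd (h₂.continuous.comp h₁.continuous_symm)
    have : φ = fun T' : X₁ => (-(s₀ (h₁.symm T'))) +ᵥ h₂ (h₁.symm T') := funext hφ
    rw [this]; exact hc
  set ψ : X₂ → X₁ := fun T'' => s₀ (h₂.symm T'') +ᵥ h₁ (h₂.symm T'') with hψ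
  have hlinv : Function.LeftInverse ψ φ := by
    intro T'
    set T := h₁.symm T' with hT
    obtain ⟨v, hv⟩ := (hbij₂ T).2 (-(s₀ T))
    have h1 : φ T' = h₂ (v +ᵥ T) := by rw [hφ, hh₂, hv, ← hT]
    have h2 : h₂.symm (φ T') = v +ᵥ T := by rw [h1, Homeomorph.symm_apply_apply]
    have hv1 : α₁ T v = -(s₀ (v +ᵥ T)) := by
      have := hcob T v
      rw [hv] at this
      have : α₁ T v = -(s₀ T) - (s₀ (v +ᵥ T) - s₀ T) := by
        rw [eq_sub_iff_add_eq, ← this]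
      rw [this]; abel
    have : ψ (φ T') = (s₀ (v +ᵥ T) + α₁ T v) +ᵥ T' := by
      rw [hψ]; simp only []
      rw [h2, hh₁, vadd_vadd, hT, Homeomorph.apply_symm_apply]
    rw [this, hv1]
    simp
  have hrinv : Function.RightInverse ψ φ := by
    intro T''
    set T := h₂.symm T'' with hT
    obtain ⟨v, hv⟩ := (hbij₁ T).2 (s₀ T)
    have h1 : ψ T'' = h₁ (v +ᵥ T) := by rw [hψ]; simp only []; rw [hh₁, hv, ← hT]
    have h2 : h₁.symm (ψ T'') = v +ᵥ T := by rw [h1, Homeomorph.symm_apply_apply]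
    have hv2 : α₂ T v = s₀ (v +ᵥ T) := by
      rw [hcob, hv]; abel
    have : φ (ψ T'') = (-(s₀ (v +ᵥ T)) + α₂ T v) +ᵥ T'' := by
      rw [hφ, h2, hh₂, vadd_vadd, hT, Homeomorph.apply_symm_apply]
    rw [this, hv2]
    simp
  have hbij : Function.Bijective φ := ⟨hlinv.injective, hrinv.surjective⟩
  let e : X₁ ≃ X₂ := ⟨φ, ψ, hlinv, hrinv⟩
  exact (Continuous.homeoOfEquivCompactToT2 (f := e) hcont).isHomeomorph
end

section
/- Let d ≥ 1 and let X, X₁, X₂ be topological spaces, each equipped with a continuous additive action of ℝ^d (all written (v,T) ↦ v +ᵥ T). Let h₁ : X → X₁ be a homeomorphism with a map α₁ : X × ℝ^d → ℝ^d such that h₁(v +ᵥ T) = α₁(T,v) +ᵥ h₁(T) for all T, v, and such that each α₁(T,·) : ℝ^d → ℝ^d is a bijection. Let h₂ : X → X₂ be a continuous surjection with a map α₂ : X × ℝ^d → ℝ^d such that h₂(v +ᵥ T) = α₂(T,v) +ᵥ h₂(T) for all T, v. Suppose there is a continuous map s₀ : X → ℝ^d with α₂(T,v) = α₁(T,v)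 + s₀(v +ᵥ T) − s₀(T) for all T, v. Then the map φ : X₁ → X₂ defined by φ(T′) = (−s₀(h₁⁻¹(T′))) +ᵥ h₂(h₁⁻¹(T′)) is a continuous surjection satisfying φ(w +ᵥ T′) = w +ᵥ φ(T′) for all T′ ∈ X₁, w ∈ ℝ^d (i.e. φ is a factor map), and moreover h₂(T) = s₀(T) +ᵥ φ(h₁(T)) for all T ∈ X. -/
/-- If an orbit-preserving continuous surjection `h₂` has a cocycle cohomologous to that of an
orbit equivalence `h₁`, then the map `φ = T′ ↦ (-s₀(h₁⁻¹ T′)) +ᵥ h₂(h₁⁻¹ T′)` is a factor map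
and `h₂(T) = s₀(T) +ᵥ φ(h₁(T))`. -/
theorem cohomologous_cocycles_give_factor_map
    (d : ℕ) (hd : 1 ≤ d)
    (X X₁ X₂ : Type*)
    [TopologicalSpace X] [TopologicalSpace X₁] [TopologicalSpace X₂]
    [AddAction (Euc d) X] [ContinuousVAdd (Euc d) X]
    [AddAction (Euc d) X₁] [ContinuousVAdd (Euc d) X₁]
    [AddAction (Euc d) X₂] [ContinuousVAdd (Euc d) X₂]
    (h₁ : X ≃ₜ X₁)
    (α₁ : X → Euc d → Euc d)
    (hh₁ : ∀ (T : X) (v : Euc d), h₁ (v +ᵥ T) = α₁ T v +ᵥ h₁ T)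
    (hbij₁ : ∀ T : X, Function.Bijective (α₁ T))
    (h₂ : X → X₂) (hh₂cont : Continuous h₂) (hh₂surj : Function.Surjective h₂)
    (α₂ : X → Euc d → Euc d)
    (hh₂ : ∀ (T : X) (v : Euc d), h₂ (v +ᵥ T) = α₂ T v +ᵥ h₂ T)
    (s₀ : X → Euc d) (hs₀ : Continuous s₀)
    (hcob : ∀ (T : X) (v : Euc d), α₂ T v = α₁ T v + (s₀ (v +ᵥ T) - s₀ T))
    (φ : X₁ → X₂)
    (hφ : ∀ T' : X₁, φ T' = (-(s₀ (h₁.symm T'))) +ᵥ h₂ (h₁.symm T')) :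
    Continuous φ ∧ Function.Surjective φ ∧
    (∀ (T' : X₁) (w : Euc d), φ (w +ᵥ T') = w +ᵥ φ T') ∧
    ∀ T : X, h₂ T = s₀ T +ᵥ φ (h₁ T) := by
  have heq : ∀ (T' : X₁) (w : Euc d), φ (w +ᵥ T') = w +ᵥ φ T' := by
    intro T' w
    set T := h₁.symm T' with hT
    obtain ⟨v, hv⟩ := (hbij₁ T).2 w
    have h1 : h₁ (v +ᵥ T) = w +ᵥ T' := by
      rw [hh₁, hv, hT, Homeomorph.apply_symm_apply]
    have h2 : h₁.symm (w +ᵥ T') = v +ᵥ T := by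
      rw [← h1, Homeomorph.symm_apply_apply]
    rw [hφ, h2, hφ T', hh₂, hcob, hv, hT]
    rw [vadd_vadd, vadd_vadd]
    congr 1
    abel
  have hfac : ∀ T : X, h₂ T = s₀ T +ᵥ φ (h₁ T) := by
    intro T
    rw [hφ, Homeomorph.symm_apply_apply, vadd_vadd]
    simp
  refine ⟨?_, ?_, heq, hfac⟩
  · have : Continuous fun T' : X₁ => (-(s₀ (h₁.symm T'))) +ᵥ h₂ (h₁.symm T') :=
      ((hs₀.comp h₁.symm.continuous).neg).vadd (hh₂cont.comp h₁.symm.continuous)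
    exact this.congr fun T' => (hφ T').symm
  · intro y
    obtain ⟨T, hT⟩ := hh₂surj y
    refine ⟨s₀ T +ᵥ h₁ T, ?_⟩
    rw [heq, ← hfac, hT]
end
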